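/- Let C be a D×m real matrix with nonnegative entries whose columns each sum to at most 1. Suppose there exist pairwise disjoint sets S₁,…,S_m ⊆ {1,…,D} such that for every j, ∑_{i∈S_j} C_{i,j} ≥ 3/4. Then for every x ∈ ℝ^m, ‖Cx‖₁ ≥ (1/2)‖x‖₁. -/
import Mathlib


/-- If C is a nonnegative D×m matrix with column sums at most 1, and each column j puts at
least 3/4 of its mass on a set S_j of rows with the S_j pairwise disjoint, then
‖Cx‖₁ ≥ (1/2)‖x‖₁ for every x. -/
theorem column_mass_l1_lower_bound
    (D m : ℕ) (C : Matrix (Fin D) (Fin m) ℝ)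
    (hnonneg : ∀ i j, 0 ≤ C i j)
    (hcolsum : ∀ j, ∑ i, C i j ≤ 1)
    (S : Fin m → Finset (Fin D))
    (hdisj : ∀ j l, j ≠ l → Disjoint (S j) (S l))
    (hmass : ∀ j, (3 : ℝ) / 4 ≤ ∑ i ∈ S j, C i j) :
    ∀ x : Fin m → ℝ, (1 / 2 : ℝ) * ∑ j, |x j| ≤ ∑ i, |C.mulVec x i| := by
  intro x
  set a : Fin m → Fin m → ℝ := fun j l => ∑ i ∈ S j, C i l with ha
  have hann : ∀ j l, 0 ≤ a j l := fun j l =>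
    Finset.sum_nonneg fun i _ => hnonneg i l
  -- Step A: sum of blocks ≤ total
  have hA : ∑ j, ∑ i ∈ S j, |C.mulVec x i| ≤ ∑ i, |C.mulVec x i| := by
    rw [← Finset.sum_biUnion (fun j _ l _ hjl => hdisj j l hjl)]
    exact Finset.sum_le_sum_of_subset_of_nonneg (Finset.subset_univ _)
      (fun i _ _ => abs_nonneg _)
  -- Step B: per-block lower bound
  have hB : ∀ j, 2 * a j j * |x j| - ∑ l, a j l * |x l| ≤ ∑ i ∈ S j, |C.mulVec x i| := by
    intro j
    have h1 : |∑ i ∈ S j, C.mulVec x i| ≤ ∑ i ∈ S j, |C.mulVec x i| :=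
      Finset.abs_sum_le_sum_abs _ _
    have h2 : ∑ i ∈ S j, C.mulVec x i = ∑ l, a j l * x l := by
      simp only [Matrix.mulVec, dotProduct]
      rw [Finset.sum_comm]
      simp [ha, Finset.sum_mul]
    have h3 : a j j * x j + ∑ l ∈ Finset.univ.erase j, a j l * x l
        = ∑ l, a j l * x l := Finset.add_sum_erase _ (fun l => a j l * x l) (Finset.mem_univ j)
    have h4 : |a j j * x j| - |∑ l ∈ Finset.univ.erase j, a j l * x l|
        ≤ |∑ l, a j l * x l| := by
      rw [← h3]
      have := abs_add_le (a j j * x j + ∑ l ∈ Finset.univ.erase j, a j l * x l)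
        (-(∑ l ∈ Finset.univ.erase j, a j l * x l))
      simp only [add_neg_cancel_right, abs_neg] at this
      linarith
    have h5 : |∑ l ∈ Finset.univ.erase j, a j l * x l|
        ≤ ∑ l ∈ Finset.univ.erase j, a j l * |x l| := by
      refine (Finset.abs_sum_le_sum_abs _ _).trans (le_of_eq ?_)
      refine Finset.sum_congr rfl fun l _ => ?_
      rw [abs_mul, abs_of_nonneg (hann j l)]
    have h6 : ∑ l, a j l * |x l|
        = a j j * |x j| + ∑ l ∈ Finset.univ.erase j, a j l * |x l| :=
      (Finset.add_sum_erase _ (fun l => a j l * |x l|) (Finset.mem_univ j)).symm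
    have h7 : |a j j * x j| = a j j * |x j| := by
      rw [abs_mul, abs_of_nonneg (hann j j)]
    calc 2 * a j j * |x j| - ∑ l, a j l * |x l|
        = a j j * |x j| - ∑ l ∈ Finset.univ.erase j, a j l * |x l| := by
          rw [h6]; ring
      _ ≤ |∑ l, a j l * x l| := by rw [← h7]; linarith
      _ = |∑ i ∈ S j, C.mulVec x i| := by rw [h2]
      _ ≤ _ := h1
  -- cross-term bound: ∑_j a j l ≤ 1 for each l
  have hC : ∀ l, ∑ j, a j l ≤ 1 := by
    intro l
    have : ∑ j, a j l = ∑ i ∈ Finset.univ.biUnion S, C i l := by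
      rw [Finset.sum_biUnion (fun j _ k _ hjk => hdisj j k hjk)]
    rw [this]
    calc ∑ i ∈ Finset.univ.biUnion S, C i l ≤ ∑ i, C i l :=
          Finset.sum_le_sum_of_subset_of_nonneg (Finset.subset_univ _)
            (fun i _ _ => hnonneg i l)
      _ ≤ 1 := hcolsum l
  have hcross : ∑ j, ∑ l, a j l * |x l| ≤ ∑ l, |x l| := by
    rw [Finset.sum_comm]
    refine Finset.sum_le_sum fun l _ => ?_
    rw [← Finset.sum_mul]
    calc (∑ j, a j l) * |x l| ≤ 1 * |x l| :=
          mul_le_mul_of_nonneg_right (hC l) (abs_nonneg _)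
      _ = |x l| := one_mul _
  have hdiag : ∑ j, (3 / 4 : ℝ) * |x j| ≤ ∑ j, a j j * |x j| :=
    Finset.sum_le_sum fun j _ =>
      mul_le_mul_of_nonneg_right (hmass j) (abs_nonneg _)
  have hsum : ∑ j, (2 * a j j * |x j| - ∑ l, a j l * |x l|)
      ≤ ∑ j, ∑ i ∈ S j, |C.mulVec x i| := Finset.sum_le_sum fun j _ => hB j
  rw [Finset.sum_sub_distrib] at hsum
  have h2d : ∑ j, 2 * a j j * |x j| = 2 * ∑ j, a j j * |x j| := by
    rw [Finset.mul_sum]; exact Finset.sum_congr rfl fun j _ => by ring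
  have hd : ∑ j, (3 / 4 : ℝ) * |x j| = (3 / 4) * ∑ j, |x j| := by
    rw [Finset.mul_sum]
  linarith [hA, hsum, hcross, hdiag, h2d.symm ▸ hsum]
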